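/- arXiv:1411.0296 — 7 statements merged into one kernel-verified Lean document; each statement's English description precedes it below -/
import Mathlib

section
/- For any real inner product space H and any λ ≥ 0, the Gaussian kernel k(x, y) = exp(-λ‖x - y‖²) is positive definite: for any x₁, …, xₙ ∈ H and c₁, …, cₙ ∈ ℝ, Σᵢ Σⱼ cᵢ cⱼ exp(-λ‖xᵢ - xⱼ‖²) ≥ 0. -/
lemma aux_pow (n : ℕ) (S : Matrix (Fin n) (Fin n) ℝ) :
    ∀ (m : ℕ) (d : Fin n → ℝ),
      0 ≤ ∑ i, ∑ j, d i * d j * (∑ k, S k i * S k j) ^ m := by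
  intro m
  induction m with
  | zero =>
    intro d
    simp only [pow_zero, mul_one]
    rw [← Finset.sum_mul_sum]
    exact mul_self_nonneg _
  | succ m ih =>
    intro d
    have key : ∀ i j : Fin n, d i * d j * (∑ k, S k i * S k j) ^ (m + 1)
        = ∑ k, (d i * S k i) * (d j * S k j) * (∑ k', S k' i * S k' j) ^ m := by
      intro i j
      have : ∀ k : Fin n, (d i * S k i) * (d j * S k j) * (∑ k', S k' i * S k' j) ^ m
          = (S k i * S k j) * (d i * d j * (∑ k', S k' i * S k' j) ^ m) := by
        intro k; ring
      simp_rw [this]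
      rw [← Finset.sum_mul, pow_succ]
      ring
    simp_rw [key]
    have h1 : ∀ i : Fin n, ∑ j, ∑ k, (d i * S k i) * (d j * S k j) * (∑ k', S k' i * S k' j) ^ m
        = ∑ k, ∑ j, (d i * S k i) * (d j * S k j) * (∑ k', S k' i * S k' j) ^ m :=
      fun i => Finset.sum_comm
    simp_rw [h1]
    rw [Finset.sum_comm]
    exact Finset.sum_nonneg fun k _ => ih (fun i => d i * S k i)

lemma aux_exp (n : ℕ) (S : Matrix (Fin n) (Fin n) ℝ) (d : Fin n → ℝ) :
    0 ≤ ∑ i, ∑ j, d i * d j * Real.exp (∑ k, S k i * S k j) := by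
  have hexp : ∀ y : ℝ, Real.exp y = ∑' m : ℕ, y ^ m / m.factorial := by
    intro y
    rw [Real.exp_eq_exp_ℝ, NormedSpace.exp_eq_tsum_div]
  have hsum : ∀ i j : Fin n, Summable (fun m : ℕ =>
      d i * d j * ((∑ k, S k i * S k j) ^ m / m.factorial)) :=
    fun i j => (Real.summable_pow_div_factorial _).mul_left _
  calc (0:ℝ) ≤ ∑' m : ℕ, ∑ i, ∑ j, d i * d j * ((∑ k, S k i * S k j) ^ m / m.factorial) := by
        apply tsum_nonneg
        intro m
        have : ∀ i j : Fin n, d i * d j * ((∑ k, S k i * S k j) ^ m / m.factorial)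
            = (d i * d j * (∑ k, S k i * S k j) ^ m) * (1 / m.factorial) := by
          intro i j; ring
        simp_rw [this, ← Finset.sum_mul]
        exact mul_nonneg (aux_pow n S m d) (by positivity)
    _ = ∑ i, ∑ j, ∑' m : ℕ, d i * d j * ((∑ k, S k i * S k j) ^ m / m.factorial) := by
        rw [Summable.tsum_finsetSum (fun i _ => summable_sum (fun j _ => hsum i j))]
        exact Finset.sum_congr rfl fun i _ => (Summable.tsum_finsetSum fun j _ => hsum i j)
    _ = ∑ i, ∑ j, d i * d j * Real.exp (∑ k, S k i * S k j) := by
        apply Finset.sum_congr rfl; intro i _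
        apply Finset.sum_congr rfl; intro j _
        rw [hexp, tsum_mul_left]

theorem stmt4 {H : Type*} [NormedAddCommGroup H] [InnerProductSpace ℝ H]
    (l : ℝ) (hl : 0 ≤ l) (n : ℕ) (x : Fin n → H) (c : Fin n → ℝ) :
    0 ≤ ∑ i, ∑ j, c i * c j * Real.exp (-l * ‖x i - x j‖ ^ 2) := by
  set G : Matrix (Fin n) (Fin n) ℝ :=
    Matrix.of (fun i j => 2 * l * inner ℝ (x i) (x j)) with hGdef
  have hG : G.PosSemidef := by
    refine Matrix.PosSemidef.of_dotProduct_mulVec_nonneg ?_ ?_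
    · ext i j
      simp only [hGdef, Matrix.conjTranspose_apply, Matrix.of_apply, star_trivial]
      rw [real_inner_comm]
    · intro v
      have : dotProduct (star v) (Matrix.mulVec G v)
          = 2 * l * inner ℝ (∑ i, v i • x i) (∑ j, v j • x j) := by
        simp only [dotProduct, Matrix.mulVec, star_trivial, hGdef, Matrix.of_apply]
        simp_rw [sum_inner, inner_sum, real_inner_smul_left, real_inner_smul_right,
          Finset.mul_sum]
        refine Finset.sum_congr rfl fun i _ => ?_
        exact Finset.sum_congr rfl fun j _ => by ring
      rw [this]
      have := real_inner_self_nonneg (x := ∑ i, v i • x i)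
      positivity
  obtain ⟨S, hSmul, hSsym⟩ : ∃ S : Matrix (Fin n) (Fin n) ℝ, S * S = G ∧ S.conjTranspose = S := by
    open scoped MatrixOrder in
    exact ⟨CFC.sqrt G, CFC.sqrt_mul_sqrt_self G hG.nonneg, (Matrix.nonneg_iff_posSemidef.mp (CFC.sqrt_nonneg G)).1⟩
  have hSfact : ∀ i j, G i j = ∑ k, S k i * S k j := by
    intro i j
    have h1 : (S * S) i j = G i j := by rw [hSmul]
    rw [← h1, Matrix.mul_apply]
    apply Finset.sum_congr rfl; intro k _
    have hsym : S i k = S k i := by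
      have h2 : S.conjTranspose = S := hSsym
      have h3 : S.conjTranspose i k = S i k := by rw [h2]
      rw [← h3, Matrix.conjTranspose_apply, star_trivial]
    rw [hsym]
  have hnorm : ∀ i j, -l * ‖x i - x j‖ ^ 2
      = (-l * ‖x i‖ ^ 2) + G i j + (-l * ‖x j‖ ^ 2) := by
    intro i j
    have := @norm_sub_sq_real H _ _ (x i) (x j)
    simp only [hGdef, Matrix.of_apply]
    rw [this]; ring
  have key : ∀ i j, c i * c j * Real.exp (-l * ‖x i - x j‖ ^ 2)
      = (c i * Real.exp (-l * ‖x i‖ ^ 2)) * (c j * Real.exp (-l * ‖x j‖ ^ 2))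
        * Real.exp (∑ k, S k i * S k j) := by
    intro i j
    rw [← hSfact, hnorm i j, Real.exp_add, Real.exp_add]
    ring
  simp_rw [key]
  exact aux_exp n S (fun i => c i * Real.exp (-l * ‖x i‖ ^ 2))
end

section
/- Let X be a set and ψ : X × X → ℝ a conditionally negative definite kernel (symmetric, vanishing on the diagonal). Then for every λ ≥ 0, the kernel k(x, y) = exp(-λ ψ(x, y)) is positive definite. -/
open Finset

/-- quadratic form as double sum -/
lemma quad_eq {n : ℕ} (A : Matrix (Fin n) (Fin n) ℝ) (c : Fin n → ℝ) :
    dotProduct (star c) (A.mulVec c) = ∑ i, ∑ j, c i * c j * A i j := by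
  simp only [dotProduct, Matrix.mulVec, dotProduct, star_trivial, Finset.mul_sum]
  exact Finset.sum_congr rfl fun i _ => Finset.sum_congr rfl fun j _ => by ring

lemma herm_apply {n : ℕ} {A : Matrix (Fin n) (Fin n) ℝ} (h : A.IsHermitian) (i j : Fin n) :
    A j i = A i j := by
  conv_lhs => rw [← h]
  simp [Matrix.conjTranspose_apply]

lemma schur {n : ℕ} {A B : Matrix (Fin n) (Fin n) ℝ} (hA : A.PosSemidef) (hB : B.PosSemidef) :
    Matrix.PosSemidef (Matrix.of fun i j => A i j * B i j) := by
  refine Matrix.PosSemidef.of_dotProduct_mulVec_nonneg ?_ ?_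
  · ext i j
    simp only [Matrix.conjTranspose_apply, Matrix.of_apply, star_trivial]
    rw [herm_apply hA.1 i j, herm_apply hB.1 i j]
  · intro c
    rw [quad_eq]
    obtain ⟨S, hSm⟩ : ∃ S : Matrix (Fin n) (Fin n) ℝ, star S * S = A := by
      open scoped MatrixOrder in
      obtain ⟨S, hS⟩ := CStarAlgebra.nonneg_iff_eq_star_mul_self.mp hA.nonneg
      exact ⟨S, hS.symm⟩
    have hAij : ∀ i j, A i j = ∑ l, S l i * S l j := by
      intro i j
      conv_lhs => rw [← hSm]
      rw [Matrix.mul_apply]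
      rfl
    have step : ∑ i, ∑ j, c i * c j * (Matrix.of fun i j => A i j * B i j) i j
        = ∑ l, ∑ i, ∑ j, (c i * S l i) * (c j * S l j) * B i j := by
      have e1 : ∀ i j : Fin n, c i * c j * (A i j * B i j)
          = ∑ l, (c i * S l i) * (c j * S l j) * B i j := by
        intro i j
        rw [hAij i j, Finset.sum_mul, Finset.mul_sum]
        exact Finset.sum_congr rfl fun l _ => by ring
      calc ∑ i, ∑ j, c i * c j * (Matrix.of fun i j => A i j * B i j) i j
          = ∑ i, ∑ l, ∑ j, (c i * S l i) * (c j * S l j) * B i j := by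
            refine Finset.sum_congr rfl fun i _ => ?_
            rw [show (∑ j, c i * c j * (Matrix.of fun i j => A i j * B i j) i j)
                = ∑ j, ∑ l, (c i * S l i) * (c j * S l j) * B i j from
              Finset.sum_congr rfl fun j _ => e1 i j]
            exact Finset.sum_comm
        _ = _ := Finset.sum_comm
    rw [step]
    refine Finset.sum_nonneg fun l _ => ?_
    have h := hB.dotProduct_mulVec_nonneg (fun i => c i * S l i)
    rwa [quad_eq] at h

lemma hpow {n : ℕ} {A : Matrix (Fin n) (Fin n) ℝ} (hA : A.PosSemidef) (k : ℕ) :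
    Matrix.PosSemidef (Matrix.of fun i j => (A i j) ^ k) := by
  induction k with
  | zero =>
    refine Matrix.PosSemidef.of_dotProduct_mulVec_nonneg ?_ ?_
    · ext i j; simp [Matrix.conjTranspose_apply]
    · intro c
      rw [quad_eq]
      simp only [Matrix.of_apply, pow_zero, mul_one]
      rw [← Finset.sum_mul_sum]
      exact mul_self_nonneg _
  | succ k ih =>
    have h := schur hA ih
    convert h using 2
    ext i j
    simp only [Matrix.of_apply]
    ring

lemma exp_psd {n : ℕ} {A : Matrix (Fin n) (Fin n) ℝ} (hA : A.PosSemidef) (c : Fin n → ℝ) :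
    0 ≤ ∑ i, ∑ j, c i * c j * Real.exp (A i j) := by
  have hexp : ∀ x : ℝ, Real.exp x = ∑' k : ℕ, x ^ k / (Nat.factorial k : ℝ) := by
    intro x
    rw [Real.exp_eq_exp_ℝ, NormedSpace.exp_eq_tsum_div]
  have hsum : ∀ i j : Fin n,
      Summable (fun k : ℕ => c i * c j * (A i j ^ k / (Nat.factorial k : ℝ))) :=
    fun i j => (Real.summable_pow_div_factorial (A i j)).mul_left _
  have key : ∑ i, ∑ j, c i * c j * Real.exp (A i j)
      = ∑' k : ℕ, ∑ i, ∑ j, c i * c j * (A i j ^ k / (Nat.factorial k : ℝ)) := by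
    rw [Summable.tsum_finsetSum (fun i _ => summable_sum fun j _ => hsum i j)]
    refine Finset.sum_congr rfl fun i _ => ?_
    rw [Summable.tsum_finsetSum (fun j _ => hsum i j)]
    refine Finset.sum_congr rfl fun j _ => ?_
    rw [hexp, ← Summable.tsum_mul_left _ (Real.summable_pow_div_factorial (A i j))]
  rw [key]
  refine tsum_nonneg fun k => ?_
  have h1 : ∑ i, ∑ j, c i * c j * (A i j ^ k / (Nat.factorial k : ℝ))
      = (∑ i, ∑ j, c i * c j * (A i j ^ k)) / (Nat.factorial k : ℝ) := by
    rw [Finset.sum_div]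
    refine Finset.sum_congr rfl fun i _ => ?_
    rw [Finset.sum_div]
    exact Finset.sum_congr rfl fun j _ => by ring
  rw [h1]
  apply div_nonneg _ (by positivity)
  have h := (hpow hA k).dotProduct_mulVec_nonneg c
  rw [quad_eq] at h
  simpa using h

theorem stmt6 {X : Type*} (ψ : X → X → ℝ)
    (hsymm : ∀ x y, ψ x y = ψ y x) (hdiag : ∀ x, ψ x x = 0)
    (hcnd : ∀ (n : ℕ) (x : Fin n → X) (c : Fin n → ℝ), (∑ i, c i) = 0 →
      ∑ i, ∑ j, c i * c j * ψ (x i) (x j) ≤ 0) :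
    ∀ l : ℝ, 0 ≤ l → ∀ (n : ℕ) (x : Fin n → X) (c : Fin n → ℝ),
      0 ≤ ∑ i, ∑ j, c i * c j * Real.exp (-l * ψ (x i) (x j)) := by
  intro l hl n x c
  cases n with
  | zero => simp
  | succ m =>
    have hApsd : Matrix.PosSemidef (Matrix.of fun i j : Fin (m+1) =>
        l * (ψ (x i) (x 0) + ψ (x j) (x 0) - ψ (x i) (x j))) := by
      refine Matrix.PosSemidef.of_dotProduct_mulVec_nonneg ?_ ?_
      · ext i j
        simp only [Matrix.conjTranspose_apply, Matrix.of_apply, star_trivial]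
        rw [hsymm (x j) (x i)]; ring
      · intro d
        rw [quad_eq]
        simp only [Matrix.of_apply]
        -- the quadratic form equals l * (2 s t - Q)
        have key : ∀ i : Fin (m+1),
            ∑ j, d i * d j * (l * (ψ (x i) (x 0) + ψ (x j) (x 0) - ψ (x i) (x j)))
            = l * ((d i * ψ (x i) (x 0)) * (∑ j, d j) + d i * (∑ j, d j * ψ (x j) (x 0))
                - ∑ j, d i * d j * ψ (x i) (x j)) := by
          intro i
          rw [show (∑ j, d i * d j * (l * (ψ (x i) (x 0) + ψ (x j) (x 0) - ψ (x i) (x j))))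
              = ∑ j, l * ((d i * ψ (x i) (x 0)) * d j + d i * (d j * ψ (x j) (x 0))
                  - d i * d j * ψ (x i) (x j)) from
            Finset.sum_congr rfl fun j _ => by ring]
          rw [← Finset.mul_sum, Finset.sum_sub_distrib, Finset.sum_add_distrib,
            ← Finset.mul_sum, ← Finset.mul_sum]
        have hform : ∑ i, ∑ j, d i * d j * (l * (ψ (x i) (x 0) + ψ (x j) (x 0) - ψ (x i) (x j)))
            = l * ((∑ i, d i * ψ (x i) (x 0)) * (∑ i, d i)
                + (∑ i, d i) * (∑ i, d i * ψ (x i) (x 0))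
                - ∑ i, ∑ j, d i * d j * ψ (x i) (x j)) := by
          rw [Finset.sum_congr rfl fun i _ => key i, ← Finset.mul_sum]
          congr 1
          rw [Finset.sum_sub_distrib, Finset.sum_add_distrib, ← Finset.sum_mul, ← Finset.sum_mul]
        rw [hform]
        -- now use CND with the shifted coefficients
        set s := ∑ i, d i with hs
        set e : Fin (m+1) → ℝ := fun i => d i - (if i = 0 then s else 0) with he
        have hsum0 : ∑ i, e i = 0 := by
          simp [he, Finset.sum_sub_distrib, ← hs]
        have hneg := hcnd (m+1) x e hsum0
        have hexpand : ∑ i, ∑ j, e i * e j * ψ (x i) (x j)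
            = (∑ i, ∑ j, d i * d j * ψ (x i) (x j))
              - s * (∑ j, d j * ψ (x 0) (x j))
              - s * (∑ i, d i * ψ (x i) (x 0))
              + s * s * ψ (x 0) (x 0) := by
          rw [show (∑ i, ∑ j, e i * e j * ψ (x i) (x j))
              = ∑ i, ∑ j, (d i * d j * ψ (x i) (x j)
                  - (if i = 0 then s else 0) * (d j * ψ (x i) (x j))
                  - (if j = 0 then s else 0) * (d i * ψ (x i) (x j))
                  + (if i = 0 then s else 0) * ((if j = 0 then s else 0) * ψ (x i) (x j))) from
            Finset.sum_congr rfl fun i _ => Finset.sum_congr rfl fun j _ => by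
              simp only [he]; ring]
          simp only [Finset.sum_add_distrib, Finset.sum_sub_distrib, ite_mul, zero_mul,
            Finset.sum_ite_irrel, Finset.sum_const_zero, Finset.sum_ite_eq', Finset.mem_univ,
            if_true]
          simp only [mul_ite, mul_zero, Finset.sum_ite_eq', Finset.mem_univ, if_true,
            ← Finset.mul_sum]
          ring
        rw [hexpand, hdiag (x 0),
          show (∑ j, d j * ψ (x 0) (x j)) = ∑ j, d j * ψ (x j) (x 0) from
            Finset.sum_congr rfl fun j _ => by rw [hsymm (x 0) (x j)]] at hneg
        have hq : (∑ i, ∑ j, d i * d j * ψ (x i) (x j))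
            ≤ 2 * s * (∑ i, d i * ψ (x i) (x 0)) := by linarith
        have : 0 ≤ (∑ i, d i * ψ (x i) (x 0)) * s + s * (∑ i, d i * ψ (x i) (x 0))
            - ∑ i, ∑ j, d i * d j * ψ (x i) (x j) := by linarith
        exact mul_nonneg hl this
    have h := exp_psd hApsd (fun i => c i * Real.exp (-l * ψ (x i) (x 0)))
    refine le_trans h (le_of_eq ?_)
    refine Finset.sum_congr rfl fun i _ => Finset.sum_congr rfl fun j _ => ?_
    simp only [Matrix.of_apply]
    rw [show c i * Real.exp (-l * ψ (x i) (x 0)) * (c j * Real.exp (-l * ψ (x j) (x 0))) *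
        Real.exp (l * (ψ (x i) (x 0) + ψ (x j) (x 0) - ψ (x i) (x j)))
      = c i * c j * (Real.exp (-l * ψ (x i) (x 0)) * (Real.exp (-l * ψ (x j) (x 0)) *
          Real.exp (l * (ψ (x i) (x 0) + ψ (x j) (x 0) - ψ (x i) (x j))))) from by ring,
      ← Real.exp_add, ← Real.exp_add]
    congr 2
    ring
end

section
/- Let X be a set and ψ : X × X → ℝ a conditionally negative definite kernel. Fix any point x₀ ∈ X. Then the kernel k(x, y) = ψ(x, x₀) + ψ(x₀, y) - ψ(x, y) is positive definite. -/
theorem stmt7 {X : Type*} (ψ : X → X → ℝ)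
    (hsymm : ∀ x y, ψ x y = ψ y x) (hdiag : ∀ x, ψ x x = 0)
    (hcnd : ∀ (n : ℕ) (x : Fin n → X) (c : Fin n → ℝ), (∑ i, c i) = 0 →
      ∑ i, ∑ j, c i * c j * ψ (x i) (x j) ≤ 0)
    (x₀ : X) :
    ∀ (n : ℕ) (x : Fin n → X) (c : Fin n → ℝ),
      0 ≤ ∑ i, ∑ j, c i * c j * (ψ (x i) x₀ + ψ x₀ (x j) - ψ (x i) (x j)) := by
  intro n x c
  set s := ∑ i, c i with hs
  set A := ∑ i, c i * ψ (x i) x₀ with hA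
  set B := ∑ j, c j * ψ x₀ (x j) with hB
  set Q := ∑ i, ∑ j, c i * c j * ψ (x i) (x j) with hQ
  have key := hcnd (n + 1) (Fin.snoc x x₀) (Fin.snoc c (-s))
    (by rw [Fin.sum_univ_castSucc]; simp [hs])
  rw [Fin.sum_univ_castSucc] at key
  simp only [Fin.snoc_castSucc, Fin.snoc_last] at key
  have hfirst : ∑ i : Fin n, ∑ j : Fin (n+1),
      c i * (Fin.snoc c (-s) : Fin (n+1) → ℝ) j * ψ (x i) ((Fin.snoc x x₀ : Fin (n+1) → X) j)
      = Q + (-s) * A := by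
    have : ∀ i : Fin n, ∑ j : Fin (n+1),
        c i * (Fin.snoc c (-s) : Fin (n+1) → ℝ) j * ψ (x i) ((Fin.snoc x x₀ : Fin (n+1) → X) j)
        = (∑ j, c i * c j * ψ (x i) (x j)) + (-s) * (c i * ψ (x i) x₀) := by
      intro i
      rw [Fin.sum_univ_castSucc]
      simp
      ring
    rw [Finset.sum_congr rfl fun i _ => this i, Finset.sum_add_distrib, ← Finset.mul_sum, ← hQ,
      ← hA]
  have hlast : ∑ j : Fin (n+1),
      -s * (Fin.snoc c (-s) : Fin (n+1) → ℝ) j * ψ x₀ ((Fin.snoc x x₀ : Fin (n+1) → X) j)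
      = -s * B := by
    rw [Fin.sum_univ_castSucc]
    simp [hdiag, Finset.mul_sum, mul_assoc, hB]
  rw [hfirst, hlast] at key
  -- key : Q + (-s) * A + (-s) * B ≤ 0
  have goalEq : ∑ i, ∑ j, c i * c j * (ψ (x i) x₀ + ψ x₀ (x j) - ψ (x i) (x j))
      = A * s + s * B - Q := by
    have : ∀ i : Fin n, ∑ j, c i * c j * (ψ (x i) x₀ + ψ x₀ (x j) - ψ (x i) (x j))
        = (c i * ψ (x i) x₀) * s + c i * (∑ j, c j * ψ x₀ (x j))
          - ∑ j, c i * c j * ψ (x i) (x j) := by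
      intro i
      rw [Finset.mul_sum, Finset.mul_sum, ← Finset.sum_add_distrib, ← Finset.sum_sub_distrib]
      exact Finset.sum_congr rfl fun j _ => by ring
    rw [Finset.sum_congr rfl fun i _ => this i, Finset.sum_sub_distrib,
      Finset.sum_add_distrib, ← Finset.sum_mul, ← Finset.sum_mul, ← hQ, ← hB, ← hA]
  rw [goalEq]
  linarith
end

section
/- The standard Euclidean metric d(x, y) = ‖x - y‖ on ℝⁿ is conditionally negative definite: for any points x₁, …, xₘ ∈ ℝⁿ and real numbers c₁, …, cₘ with Σ cᵢ = 0, Σᵢ Σⱼ cᵢ cⱼ ‖xᵢ - xⱼ‖ ≤ 0. -/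
open Finset MeasureTheory Set

private theorem psd_pow (n m k : ℕ) (x : Fin m → EuclideanSpace ℝ (Fin n)) (c : Fin m → ℝ) :
    0 ≤ ∑ i, ∑ j, c i * c j * (inner ℝ (x i) (x j) : ℝ) ^ k := by
  have key : ∀ i j : Fin m, c i * c j * (inner ℝ (x i) (x j) : ℝ) ^ k
      = ∑ g ∈ Fintype.piFinset (fun _ : Fin k => (univ : Finset (Fin n))),
          (c i * ∏ t, x i (g t)) * (c j * ∏ t, x j (g t)) := by
    intro i j
    have hinner : (inner ℝ (x i) (x j) : ℝ) = ∑ b, x i b * x j b := by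
      simp [PiLp.inner_apply, RCLike.inner_apply, mul_comm]
    have hpow : (inner ℝ (x i) (x j) : ℝ) ^ k = ∏ _t : Fin k, ∑ b, x i b * x j b := by
      rw [Finset.prod_const, hinner, card_univ, Fintype.card_fin]
    rw [hpow, Finset.prod_univ_sum, Finset.mul_sum]
    refine Finset.sum_congr rfl fun g _ => ?_
    rw [Finset.prod_mul_distrib]; ring
  have h2 : ∑ i, ∑ j, c i * c j * (inner ℝ (x i) (x j) : ℝ) ^ k
      = ∑ g ∈ Fintype.piFinset (fun _ : Fin k => (univ : Finset (Fin n))),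
          (∑ i, c i * ∏ t, x i (g t)) * (∑ j, c j * ∏ t, x j (g t)) := by
    simp_rw [key, Finset.sum_mul_sum]
    calc ∑ i, ∑ j, ∑ g ∈ Fintype.piFinset (fun _ : Fin k => (univ : Finset (Fin n))),
            (c i * ∏ t, x i (g t)) * (c j * ∏ t, x j (g t))
        = ∑ i, ∑ g ∈ Fintype.piFinset (fun _ : Fin k => (univ : Finset (Fin n))), ∑ j,
            (c i * ∏ t, x i (g t)) * (c j * ∏ t, x j (g t)) :=
          Finset.sum_congr rfl fun i _ => Finset.sum_comm
      _ = _ := Finset.sum_comm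
  rw [h2]
  exact Finset.sum_nonneg fun g _ => mul_self_nonneg _

private theorem gauss_psd (n m : ℕ) (x : Fin m → EuclideanSpace ℝ (Fin n)) (c : Fin m → ℝ)
    {s : ℝ} (hs : 0 ≤ s) :
    0 ≤ ∑ i, ∑ j, c i * c j * Real.exp (-(‖x i - x j‖ ^ 2 * s)) := by
  set d : Fin m → ℝ := fun i => c i * Real.exp (-(‖x i‖ ^ 2 * s)) with hd
  set F : Fin m → Fin m → ℕ → ℝ := fun i j k =>
    d i * d j * ((2 * s) ^ k / k.factorial * (inner ℝ (x i) (x j) : ℝ) ^ k) with hF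
  have hsumF : ∀ i j, Summable (F i j) := by
    intro i j
    have h1 : Summable (fun k : ℕ => (2 * s * (inner ℝ (x i) (x j) : ℝ)) ^ k / k.factorial) :=
      Real.summable_pow_div_factorial _
    refine (h1.mul_left (d i * d j)).congr fun k => ?_
    rw [hF]; simp only []; rw [mul_pow]; ring
  have hterm : ∀ i j : Fin m, c i * c j * Real.exp (-(‖x i - x j‖ ^ 2 * s))
      = ∑' k : ℕ, F i j k := by
    intro i j
    have hexp : Real.exp (2 * s * (inner ℝ (x i) (x j) : ℝ))
        = ∑' k : ℕ, (2 * s * (inner ℝ (x i) (x j) : ℝ)) ^ k / k.factorial := by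
      rw [Real.exp_eq_exp_ℝ, NormedSpace.exp_eq_tsum_div]
    have hns : ‖x i - x j‖ ^ 2 = ‖x i‖ ^ 2 - 2 * (inner ℝ (x i) (x j) : ℝ) + ‖x j‖ ^ 2 :=
      norm_sub_sq_real _ _
    have harg : -(‖x i - x j‖ ^ 2 * s)
        = -(‖x i‖ ^ 2 * s) + -(‖x j‖ ^ 2 * s) + 2 * s * (inner ℝ (x i) (x j) : ℝ) := by
      rw [hns]; ring
    have heq : c i * c j * Real.exp (-(‖x i - x j‖ ^ 2 * s))
        = d i * d j * Real.exp (2 * s * (inner ℝ (x i) (x j) : ℝ)) := by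
      rw [harg, Real.exp_add, Real.exp_add, hd]; ring
    rw [heq, hexp, ← tsum_mul_left]
    congr 1; funext k; rw [hF]; simp only []; rw [mul_pow]; ring
  simp_rw [hterm]
  have swap1 : ∀ i : Fin m, ∑ j, ∑' k, F i j k = ∑' k, ∑ j, F i j k :=
    fun i => (Summable.tsum_finsetSum (fun j _ => hsumF i j)).symm
  simp_rw [swap1]
  rw [← Summable.tsum_finsetSum (fun i _ => summable_sum fun j _ => hsumF i j)]
  refine tsum_nonneg fun k => ?_
  have hrw : ∀ i j : Fin m, F i j k
      = (2 * s) ^ k / k.factorial * (d i * d j * (inner ℝ (x i) (x j) : ℝ) ^ k) := by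
    intro i j; rw [hF]; ring
  simp_rw [hrw, ← Finset.mul_sum]
  exact mul_nonneg (by positivity) (psd_pow n m k x d)

private noncomputable def Iconst : ℝ :=
  ∫ u in Ioi (0:ℝ), (1 - Real.exp (-u)) * u ^ (-(3:ℝ)/2)

private theorem int_d {b : ℝ} (hb : 0 ≤ b) :
    IntegrableOn (fun s : ℝ => (1 - Real.exp (-(b * s))) * s ^ (-(3:ℝ)/2)) (Ioi 0) := by
  have hcont : ContinuousOn (fun s : ℝ => (1 - Real.exp (-(b * s))) * s ^ (-(3:ℝ)/2)) (Ioi 0) := by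
    apply ContinuousOn.mul
    · exact (continuous_const.sub ((Real.continuous_exp.comp
        ((continuous_const.mul continuous_id).neg)))).continuousOn
    · intro s hs
      exact (Real.continuousAt_rpow_const s _ (Or.inl (ne_of_gt hs))).continuousWithinAt
  have hmeas : ∀ t ⊆ Ioi (0:ℝ), MeasurableSet t →
      AEStronglyMeasurable (fun s : ℝ => (1 - Real.exp (-(b * s))) * s ^ (-(3:ℝ)/2))
        (volume.restrict t) :=
    fun t ht hmt => ((hcont.mono ht).aestronglyMeasurable hmt)
  have hnn : ∀ s : ℝ, 0 < s → 0 ≤ (1 - Real.exp (-(b * s))) * s ^ (-(3:ℝ)/2) := by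
    intro s hs
    apply mul_nonneg
    · have : Real.exp (-(b * s)) ≤ 1 := Real.exp_le_one_iff.2 (by nlinarith)
      linarith
    · exact Real.rpow_nonneg hs.le _
  have h1 : IntegrableOn (fun s : ℝ => (1 - Real.exp (-(b * s))) * s ^ (-(3:ℝ)/2)) (Set.Ioc 0 1) := by
    have hint : IntegrableOn (fun s : ℝ => b * s ^ (-(1:ℝ)/2)) (Set.Ioc 0 1) := by
      have := intervalIntegral.intervalIntegrable_rpow' (r := -(1:ℝ)/2) (a := 0) (b := 1)
        (by norm_num)
      rw [intervalIntegrable_iff_integrableOn_Ioc_of_le zero_le_one] at this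
      exact this.const_mul b
    refine Integrable.mono hint (hmeas _ Ioc_subset_Ioi_self measurableSet_Ioc) ?_
    filter_upwards [ae_restrict_mem measurableSet_Ioc] with s hs
    rcases hs with ⟨hs0, _⟩
    rw [Real.norm_eq_abs, abs_of_nonneg (hnn s hs0), Real.norm_eq_abs]
    have hb1 : 1 - Real.exp (-(b * s)) ≤ b * s := by
      have := Real.add_one_le_exp (-(b * s)); linarith
    have h2 : (1 - Real.exp (-(b * s))) * s ^ (-(3:ℝ)/2) ≤ (b * s) * s ^ (-(3:ℝ)/2) :=
      mul_le_mul_of_nonneg_right hb1 (Real.rpow_nonneg hs0.le _)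
    refine h2.trans (le_abs_self _ |>.trans (le_of_eq ?_))
    rw [abs_of_nonneg (by positivity), abs_of_nonneg (by positivity), mul_assoc]
    congr 1
    rw [← Real.rpow_one_add' (by positivity) (by norm_num)]
    norm_num
  have h2 : IntegrableOn (fun s : ℝ => (1 - Real.exp (-(b * s))) * s ^ (-(3:ℝ)/2)) (Set.Ioi 1) := by
    have hint : IntegrableOn (fun s : ℝ => s ^ (-(3:ℝ)/2)) (Set.Ioi 1) :=
      integrableOn_Ioi_rpow_of_lt (by norm_num) one_pos
    refine Integrable.mono hint (hmeas _ (fun s hs => show (0:ℝ) < s from lt_trans one_pos (show (1:ℝ) < s from hs)) measurableSet_Ioi) ?_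
    filter_upwards [ae_restrict_mem measurableSet_Ioi] with s hs
    have hs0 : (0:ℝ) < s := lt_trans one_pos hs
    rw [Real.norm_eq_abs, abs_of_nonneg (hnn s hs0), Real.norm_eq_abs,
      abs_of_nonneg (Real.rpow_nonneg hs0.le _)]
    have : Real.exp (-(b * s)) ≤ 1 := Real.exp_le_one_iff.2 (by nlinarith)
    nlinarith [Real.rpow_nonneg hs0.le (-(3:ℝ)/2), Real.exp_pos (-(b*s))]
  have hU : Ioi (0:ℝ) = Set.Ioc 0 1 ∪ Set.Ioi 1 := (Set.Ioc_union_Ioi_eq_Ioi zero_le_one).symm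
  rw [hU]
  exact h1.union h2

private theorem int_one :
    IntegrableOn (fun u : ℝ => (1 - Real.exp (-u)) * u ^ (-(3:ℝ)/2)) (Ioi 0) := by
  have h := int_d (zero_le_one (α := ℝ))
  simpa using h

private theorem rep {a : ℝ} (ha : 0 ≤ a) :
    ∫ s in Ioi (0:ℝ), (1 - Real.exp (-(a ^ 2 * s))) * s ^ (-(3:ℝ)/2) = a * Iconst := by
  rcases eq_or_lt_of_le ha with h0 | hpos
  · simp only [← h0]
    simp
  · set b := a ^ 2 with hb
    have hbpos : 0 < b := by positivity
    have hcomp := MeasureTheory.integral_comp_mul_left_Ioi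
      (fun u => (1 - Real.exp (-u)) * u ^ (-(3:ℝ)/2)) 0 hbpos
    simp only [mul_zero, smul_eq_mul] at hcomp
    have hcong : ∫ s in Ioi (0:ℝ), (1 - Real.exp (-(b * s))) * (b * s) ^ (-(3:ℝ)/2)
        = ∫ s in Ioi (0:ℝ), b ^ (-(3:ℝ)/2) * ((1 - Real.exp (-(b * s))) * s ^ (-(3:ℝ)/2)) := by
      refine setIntegral_congr_fun measurableSet_Ioi fun s hs => ?_
      rw [Real.mul_rpow hbpos.le (le_of_lt hs)]
      ring
    rw [hcong, integral_const_mul] at hcomp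
    have hbne : b ^ (-(3:ℝ)/2) ≠ 0 := by positivity
    have hJ : ∫ s in Ioi (0:ℝ), (1 - Real.exp (-(b * s))) * s ^ (-(3:ℝ)/2)
        = (b ^ (-(3:ℝ)/2))⁻¹ * (b⁻¹ * Iconst) := by
      rw [Iconst, ← hcomp, ← mul_assoc, inv_mul_cancel₀ hbne, one_mul]
    rw [hJ]
    have hkey : (b ^ (-(3:ℝ)/2))⁻¹ * b⁻¹ = a := by
      rw [← Real.rpow_neg hbpos.le, ← Real.rpow_neg_one b, ← Real.rpow_add hbpos,
        hb, ← Real.rpow_natCast a 2, ← Real.rpow_mul ha]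
      norm_num
    rw [← mul_assoc, hkey]

private theorem Iconst_pos : 0 < Iconst := by
  set f : ℝ → ℝ := fun u => (1 - Real.exp (-u)) * u ^ (-(3:ℝ)/2) with hf
  have hnn : ∀ u : ℝ, 0 < u → 0 ≤ f u := by
    intro u hu
    apply mul_nonneg
    · have : Real.exp (-u) ≤ 1 := Real.exp_le_one_iff.2 (by linarith)
      linarith
    · exact Real.rpow_nonneg hu.le _
  set ε : ℝ := (1 - Real.exp (-1)) * (2:ℝ) ^ (-(3:ℝ)/2) with hε
  have hεpos : 0 < ε := by
    apply mul_pos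
    · have : Real.exp (-1) < 1 := Real.exp_lt_one_iff.2 (by norm_num)
      linarith
    · positivity
  have hlow : ∀ u ∈ Set.Ioc (1:ℝ) 2, ε ≤ f u := by
    intro u hu
    rcases hu with ⟨h1, h2⟩
    have hu0 : (0:ℝ) < u := lt_trans one_pos h1
    apply mul_le_mul
    · have : Real.exp (-u) ≤ Real.exp (-1) := Real.exp_le_exp.2 (by linarith)
      linarith
    · exact Real.rpow_le_rpow_of_nonpos hu0 h2 (by norm_num)
    · positivity
    · have h3 : Real.exp (-u) ≤ Real.exp (-1) := Real.exp_le_exp.2 (by linarith)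
      have h4 : Real.exp (-1) < 1 := Real.exp_lt_one_iff.2 (by norm_num)
      linarith
  have hsub : Set.Ioc (1:ℝ) 2 ⊆ Ioi 0 := fun u hu => lt_trans one_pos hu.1
  have hint2 : IntegrableOn f (Set.Ioc 1 2) := int_one.mono_set hsub
  have step1 : ε * (volume (Set.Ioc (1:ℝ) 2)).toReal ≤ ∫ u in Set.Ioc (1:ℝ) 2, f u :=
    setIntegral_ge_of_const_le_real measurableSet_Ioc (by simp) hlow hint2
  have hvol : (volume (Set.Ioc (1:ℝ) 2)).toReal = 1 := by
    simp [Real.volume_Ioc]; norm_num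
  rw [hvol, mul_one] at step1
  have step2 : ∫ u in Set.Ioc (1:ℝ) 2, f u ≤ ∫ u in Ioi (0:ℝ), f u := by
    apply setIntegral_mono_set int_one
    · filter_upwards [ae_restrict_mem measurableSet_Ioi] with u hu using hnn u hu
    · exact Filter.Eventually.of_forall hsub
  calc (0:ℝ) < ε := hεpos
    _ ≤ ∫ u in Set.Ioc (1:ℝ) 2, f u := step1
    _ ≤ Iconst := step2

theorem stmt9 (n m : ℕ) (x : Fin m → EuclideanSpace ℝ (Fin n)) (c : Fin m → ℝ)
    (hc : ∑ i, c i = 0) :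
    ∑ i, ∑ j, c i * c j * ‖x i - x j‖ ≤ 0 := by
  -- each summand kernel is integrable
  have hint : ∀ i j : Fin m, IntegrableOn
      (fun s : ℝ => c i * c j * ((1 - Real.exp (-(‖x i - x j‖ ^ 2 * s))) * s ^ (-(3:ℝ)/2)))
      (Ioi 0) := by
    intro i j
    exact (int_d (by positivity : (0:ℝ) ≤ ‖x i - x j‖ ^ 2)).const_mul _
  have hrep : ∀ i j : Fin m,
      ∫ s in Ioi (0:ℝ), (1 - Real.exp (-(‖x i - x j‖ ^ 2 * s))) * s ^ (-(3:ℝ)/2)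
        = ‖x i - x j‖ * Iconst :=
    fun i j => rep (norm_nonneg _)
  -- key identity
  have key : Iconst * (∑ i, ∑ j, c i * c j * ‖x i - x j‖)
      = ∫ s in Ioi (0:ℝ), ∑ i, ∑ j,
          c i * c j * ((1 - Real.exp (-(‖x i - x j‖ ^ 2 * s))) * s ^ (-(3:ℝ)/2)) := by
    rw [integral_finset_sum _ (fun i _ => (integrable_finset_sum _ (fun j _ => hint i j)))]
    simp_rw [fun i => integral_finset_sum (univ : Finset (Fin m)) (fun j _ => hint i j)]
    simp_rw [integral_const_mul, hrep, Finset.mul_sum]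
    refine Finset.sum_congr rfl fun i _ => Finset.sum_congr rfl fun j _ => by ring
  -- the integrand is nonpositive on Ioi 0
  have hnonpos : ∫ s in Ioi (0:ℝ), ∑ i, ∑ j,
      c i * c j * ((1 - Real.exp (-(‖x i - x j‖ ^ 2 * s))) * s ^ (-(3:ℝ)/2)) ≤ 0 := by
    refine setIntegral_nonpos measurableSet_Ioi fun s hs => ?_
    have hs0 : (0:ℝ) < s := hs
    have hsplit : ∀ i j : Fin m,
        c i * c j * ((1 - Real.exp (-(‖x i - x j‖ ^ 2 * s))) * s ^ (-(3:ℝ)/2))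
        = s ^ (-(3:ℝ)/2) * (c i * c j)
          - s ^ (-(3:ℝ)/2) * (c i * c j * Real.exp (-(‖x i - x j‖ ^ 2 * s))) := by
      intro i j; ring
    have e1 : ∑ i, ∑ j, c i * c j * ((1 - Real.exp (-(‖x i - x j‖ ^ 2 * s))) * s ^ (-(3:ℝ)/2))
        = s ^ (-(3:ℝ)/2) * ((∑ i, c i) * (∑ j, c j))
          - s ^ (-(3:ℝ)/2) * ∑ i, ∑ j, c i * c j * Real.exp (-(‖x i - x j‖ ^ 2 * s)) := by
      rw [Finset.sum_mul_sum, Finset.mul_sum, Finset.mul_sum, ← Finset.sum_sub_distrib]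
      refine Finset.sum_congr rfl fun i _ => ?_
      rw [Finset.mul_sum, Finset.mul_sum, ← Finset.sum_sub_distrib]
      exact Finset.sum_congr rfl fun j _ => by ring
    rw [e1, hc, mul_zero, mul_zero, zero_sub, neg_nonpos]
    exact mul_nonneg (Real.rpow_nonneg hs0.le _) (gauss_psd n m x c hs0.le)
  have : Iconst * (∑ i, ∑ j, c i * c j * ‖x i - x j‖) ≤ Iconst * 0 := by
    rw [mul_zero, key]; exact hnonpos
  exact le_of_mul_le_mul_left this Iconst_pos
end

section
/- Let (X, d) be a geodesic metric space such that the geodesic Gaussian kernel exp(-λ d(x,y)²) is positive definite for all λ > 0. Then (X, d) is flat in the sense of Alexandrov: every geodesic triangle in X can be isometrically embedded into a Euclidean space (in particular into a 2-dimensional Euclidean subspace). -/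
open Filter Topology AffineMap Finset

lemma aux_slope (r : ℝ) :
    Tendsto (fun l : ℝ => (Real.exp (-l * r) - 1) / l) (𝓝[>] 0) (𝓝 (-r)) := by
  have h1 : HasDerivAt (fun l : ℝ => -l * r) (-r) 0 := by
    simpa using ((hasDerivAt_id (0:ℝ)).neg.mul_const r)
  have hd : HasDerivAt (fun l : ℝ => Real.exp (-l * r)) (-r) 0 := by
    simpa using h1.exp
  have h2 := hasDerivAt_iff_tendsto_slope.mp hd
  have h3 : Tendsto (slope (fun l : ℝ => Real.exp (-l * r)) 0) (𝓝[>] 0) (𝓝 (-r)) :=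
    h2.mono_left (nhdsWithin_mono 0 (fun y hy => ne_of_gt hy))
  refine h3.congr fun l => ?_
  rw [slope_def_field]
  simp

lemma aux_negtype {X : Type*} [MetricSpace X]
    (hpd : ∀ l : ℝ, 0 < l → ∀ (n : ℕ) (x : Fin n → X) (c : Fin n → ℝ),
      0 ≤ ∑ i, ∑ j, c i * c j * Real.exp (-l * (dist (x i) (x j)) ^ 2))
    (n : ℕ) (x : Fin n → X) (c : Fin n → ℝ) (hc : ∑ i, c i = 0) :
    ∑ i, ∑ j, c i * c j * dist (x i) (x j) ^ 2 ≤ 0 := by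
  set f : ℝ → ℝ := fun l => ∑ i, ∑ j, c i * c j * ((Real.exp (-l * dist (x i) (x j) ^ 2) - 1) / l)
    with hf
  have hf_nonneg : ∀ l ∈ Set.Ioi (0:ℝ), 0 ≤ f l := by
    intro l hl
    have h1 := hpd l hl n x c
    have heq : f l = (∑ i, ∑ j, c i * c j * Real.exp (-l * dist (x i) (x j) ^ 2)) / l
        - ((∑ i, c i) * (∑ j, c j)) / l := by
      rw [hf, Finset.sum_mul_sum, Finset.sum_div, Finset.sum_div, ← Finset.sum_sub_distrib]
      refine Finset.sum_congr rfl fun i _ => ?_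
      rw [Finset.sum_div, Finset.sum_div, ← Finset.sum_sub_distrib]
      refine Finset.sum_congr rfl fun j _ => ?_
      ring
    rw [heq, hc]
    simp only [zero_mul, zero_div, sub_zero]
    exact div_nonneg h1 (le_of_lt hl)
  have hlim : Tendsto f (𝓝[>] 0) (𝓝 (∑ i, ∑ j, c i * c j * -(dist (x i) (x j) ^ 2))) := by
    refine tendsto_finset_sum _ fun i _ => tendsto_finset_sum _ fun j _ => ?_
    exact (aux_slope _).const_mul _
  have h0 : 0 ≤ ∑ i, ∑ j, c i * c j * -(dist (x i) (x j) ^ 2) :=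
    ge_of_tendsto hlim (eventually_mem_nhdsWithin.mono hf_nonneg)
  have : ∑ i, ∑ j, c i * c j * -(dist (x i) (x j) ^ 2)
      = -(∑ i, ∑ j, c i * c j * dist (x i) (x j) ^ 2) := by
    simp [← Finset.sum_neg_distrib]
  linarith [this ▸ h0]

lemma aux_embed {X : Type*} [MetricSpace X]
    (hneg : ∀ (n : ℕ) (x : Fin n → X) (c : Fin n → ℝ), (∑ i, c i) = 0 →
      ∑ i, ∑ j, c i * c j * dist (x i) (x j) ^ 2 ≤ 0)
    (m : ℕ) (z : Fin (m+1) → X) :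
    ∃ w : Fin (m+1) → EuclideanSpace ℝ (Fin (m+1)),
      ∀ i j, dist (w i) (w j) = dist (z i) (z j) := by
  classical
  set D : Fin (m+1) → Fin (m+1) → ℝ := fun i j => dist (z i) (z j) ^ 2 with hD
  have hDsymm : ∀ i j, D i j = D j i := fun i j => by simp [hD, dist_comm]
  have hD0 : ∀ i, D i i = 0 := fun i => by simp [hD]
  set G : Matrix (Fin (m+1)) (Fin (m+1)) ℝ :=
    Matrix.of (fun i j => (D i 0 + D j 0 - D i j)/2) with hG
  have hGapp : ∀ i j, G i j = (D i 0 + D j 0 - D i j)/2 := fun i j => rfl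
  have hpsd : G.PosSemidef := by
    rw [Matrix.posSemidef_iff_dotProduct_mulVec]
    constructor
    · ext i j
      simp only [Matrix.conjTranspose_apply, hGapp, star_trivial]
      rw [hDsymm i j]; ring
    · intro v
      set S : ℝ := ∑ i, v i with hS
      set c' : Fin (m+1) → ℝ := fun i => v i - if i = 0 then S else 0 with hc'def
      have hc' : ∑ i, c' i = 0 := by
        simp [hc'def, Finset.sum_sub_distrib, hS]
      have key := hneg (m+1) z c' hc'
      have hsum_e : ∀ (g : Fin (m+1) → ℝ),
          ∑ i, (if i = 0 then S else 0) * g i = S * g 0 := by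
        intro g; simp [ite_mul]
      have id2 : ∑ i, ∑ j, c' i * c' j * D i j
          = (∑ i, ∑ j, v i * v j * D i j) - 2*S*(∑ i, v i * D i 0) := by
        have step : ∀ i j, c' i * c' j * D i j
            = v i * v j * D i j - (if i = 0 then S else 0) * (v j * D i j)
              - (if j = 0 then S else 0) * (v i * D i j)
              + (if i = 0 then S else 0) * ((if j = 0 then S else 0) * D i j) := by
          intro i j; simp only [hc'def]; ring
        simp only [step, Finset.sum_add_distrib, Finset.sum_sub_distrib, hsum_e,
          ← Finset.mul_sum]
        have h00 : ∑ i, v i * D 0 i = ∑ i, v i * D i 0 :=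
          Finset.sum_congr rfl fun i _ => by rw [hDsymm 0 i]
        rw [h00, hD0]; ring
      -- now the goal: 0 ≤ star v ⬝ᵥ G *ᵥ v
      have expand : dotProduct (star v) (G.mulVec v)
          = S * (∑ i, v i * D i 0) - (∑ i, ∑ j, v i * v j * D i j)/2 := by
        have hterm : ∀ i j : Fin (m+1), v i * ((D i 0 + D j 0 - D i j)/2 * v j)
            = (v i * D i 0 / 2) * v j + v i * (D j 0 * v j / 2) - (v i * v j * D i j)/2 := by
          intro i j; ring
        simp only [dotProduct, Matrix.mulVec, Pi.star_apply, star_trivial, hGapp]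
        simp only [Finset.mul_sum, hterm, Finset.sum_add_distrib, Finset.sum_sub_distrib]
        have t1 : ∀ x : Fin (m+1), ∑ x1, (v x * D x 0/2) * v x1 = (v x * D x 0/2) * S :=
          fun x => by rw [← Finset.mul_sum]
        have t2 : ∀ x : Fin (m+1), ∑ x1, v x * (D x1 0 * v x1/2)
            = v x * ((∑ x1, D x1 0 * v x1)/2) := fun x => by
          rw [← Finset.mul_sum, Finset.sum_div]
        simp only [t1, t2]
        have hc : ∑ i, D i 0 * v i = ∑ i, v i * D i 0 :=
          Finset.sum_congr rfl fun i _ => mul_comm _ _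
        rw [← Finset.sum_mul, ← Finset.mul_sum, hc]
        have t3 : ∑ x : Fin (m+1), ∑ x1, v x * v x1 * D x x1 / 2
            = (∑ x : Fin (m+1), ∑ x1, v x * v x1 * D x x1)/2 := by
          rw [Finset.sum_div]
          exact Finset.sum_congr rfl fun i _ => by rw [Finset.sum_div]
        rw [t3]
        have hsd : ∑ x : Fin (m+1), v x * D x 0 / 2 = (∑ x : Fin (m+1), v x * D x 0)/2 := by
          rw [Finset.sum_div]
        rw [hsd, ← Finset.sum_mul, ← hS]; ring
      rw [expand]; linarith
  obtain ⟨B, hB⟩ : ∃ B : Matrix (Fin (m+1)) (Fin (m+1)) ℝ, G = B.conjTranspose * B := by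
    open scoped MatrixOrder in
    obtain ⟨R, hX, -, hXG⟩ := CFC.exists_sqrt_of_isSelfAdjoint_of_quasispectrumRestricts
      hpsd.isHermitian (QuasispectrumRestricts.nnreal_of_nonneg (Matrix.nonneg_iff_posSemidef.mpr hpsd))
    exact ⟨R, hXG.symm.trans (congrArg (· * R) hX.star_eq.symm)⟩
  have hBG : ∀ i j, ∑ k, B k i * B k j = G i j := by
    intro i j
    have h := congrArg (fun M : Matrix (Fin (m+1)) (Fin (m+1)) ℝ => M i j) hB
    simp only [Matrix.mul_apply, Matrix.conjTranspose_apply, star_trivial] at h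
    exact h.symm
  refine ⟨fun i => (WithLp.toLp 2 (fun k => B k i) : EuclideanSpace ℝ (Fin (m+1))), fun i j => ?_⟩
  have key2 : ∑ k, (B k i - B k j)^2 = D i j := by
    have expand2 : ∀ k, (B k i - B k j)^2
        = B k i * B k i + B k j * B k j - 2*(B k i * B k j) := fun k => by ring
    simp only [expand2, Finset.sum_add_distrib, Finset.sum_sub_distrib, ← Finset.mul_sum]
    rw [hBG i i, hBG j j, hBG i j]
    simp only [hGapp, hD0]
    ring
  rw [EuclideanSpace.dist_eq]
  simp only [Real.dist_eq, sq_abs]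
  rw [key2, hD]
  exact Real.sqrt_sq dist_nonneg

lemma aux_L1 {E : Type*} [NormedAddCommGroup E] [InnerProductSpace ℝ E] (A B C : E) (u v : ℝ) :
    dist (lineMap A B u) (lineMap B C v) ^ 2 =
      (1-u)^2 * dist A B ^ 2 + v^2 * dist B C ^ 2 +
        (1-u)*v*(dist A C ^2 - dist A B ^2 - dist B C ^2) := by
  have hx : (lineMap A B u : E) - (lineMap B C v : E) = (1-u) • (A-B) + v • (B-C) := by
    simp only [lineMap_apply_module]
    module
  rw [dist_eq_norm, hx, norm_add_sq_real, norm_smul, norm_smul,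
    real_inner_smul_left, real_inner_smul_right]
  have hp : (inner ℝ (A-B) (B-C) : ℝ) = (‖A-C‖^2 - ‖A-B‖^2 - ‖B-C‖^2)/2 := by
    have h := norm_add_sq_real (A-B) (B-C)
    rw [sub_add_sub_cancel] at h
    linarith
  rw [hp, dist_eq_norm, dist_eq_norm, dist_eq_norm, Real.norm_eq_abs, Real.norm_eq_abs, mul_pow, mul_pow, sq_abs, sq_abs]
  ring

lemma aux_seg {E : Type*} [NormedAddCommGroup E] [InnerProductSpace ℝ E]
    (a b p : E) (h1 : dist a p ≤ dist a b) (h2 : dist p b = dist a b - dist a p) :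
    p = lineMap a b (dist a p / dist a b) := by
  rcases eq_or_ne (dist a b) 0 with h0 | h0
  · have hap : dist a p = 0 := le_antisymm (h0 ▸ h1) dist_nonneg
    have h3 : a = p := by rwa [dist_eq_zero] at hap
    have h4 : a = b := by rwa [dist_eq_zero] at h0
    simp [← h3, ← h4, hap]
  · exact eq_lineMap_of_dist_eq_mul_of_dist_eq_mul
      (by rw [div_mul_cancel₀ _ h0])
      (by rw [sub_mul, one_mul, div_mul_cancel₀ _ h0, h2])

lemma aux_side {X : Type*} [MetricSpace X] {γ : ℝ → X} {L : ℝ} {p q x : X}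
    (h0 : γ 0 = p) (hL : γ L = q)
    (hiso : ∀ t ∈ Set.Icc (0:ℝ) L, ∀ t' ∈ Set.Icc (0:ℝ) L, dist (γ t) (γ t') = |t - t'|)
    (hx : x ∈ γ '' Set.Icc (0:ℝ) L) :
    dist p q = L ∧ dist p x ≤ L ∧ dist x q = L - dist p x := by
  obtain ⟨t, ht, rfl⟩ := hx
  have hL0 : 0 ≤ L := le_trans ht.1 ht.2
  have h0m : (0:ℝ) ∈ Set.Icc (0:ℝ) L := ⟨le_refl _, hL0⟩
  have hLm : L ∈ Set.Icc (0:ℝ) L := ⟨hL0, le_refl _⟩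
  have e1 : dist p q = L := by
    rw [← h0, ← hL, hiso 0 h0m L hLm]
    rw [abs_of_nonpos (by linarith)]; ring
  have e2 : dist p (γ t) = t := by
    rw [← h0, hiso 0 h0m t ht, abs_of_nonpos (by linarith [ht.1])]; ring
  have e3 : dist (γ t) q = L - t := by
    rw [← hL, hiso t ht L hLm, abs_of_nonpos (by linarith [ht.2])]; ring
  exact ⟨e1, by rw [e2]; exact ht.2, by rw [e2, e3]⟩

lemma aux_adj {X : Type*} [MetricSpace X]
    (hemb : ∀ z : Fin 5 → X, ∃ w : Fin 5 → EuclideanSpace ℝ (Fin 5),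
      ∀ i j, dist (w i) (w j) = dist (z i) (z j))
    (a b c p q : X) (A B C : EuclideanSpace ℝ (Fin 2))
    (hAB : dist A B = dist a b) (hBC : dist B C = dist b c) (hAC : dist A C = dist a c)
    (hp1 : dist a p ≤ dist a b) (hp2 : dist p b = dist a b - dist a p)
    (hq1 : dist b q ≤ dist b c) (hq2 : dist q c = dist b c - dist b q) :
    dist (lineMap A B (dist a p / dist a b)) (lineMap B C (dist b q / dist b c)) = dist p q := by
  obtain ⟨w, hw⟩ := hemb ![a,b,c,p,q]
  have e01 : dist (w 0) (w 1) = dist a b := by simpa using hw 0 1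
  have e12 : dist (w 1) (w 2) = dist b c := by simpa using hw 1 2
  have e02 : dist (w 0) (w 2) = dist a c := by simpa using hw 0 2
  have e03 : dist (w 0) (w 3) = dist a p := by simpa using hw 0 3
  have e31 : dist (w 3) (w 1) = dist p b := by simpa using hw 3 1
  have e14 : dist (w 1) (w 4) = dist b q := by simpa using hw 1 4
  have e42 : dist (w 4) (w 2) = dist q c := by simpa using hw 4 2
  have e34 : dist (w 3) (w 4) = dist p q := by simpa using hw 3 4
  have hp : w 3 = lineMap (w 0) (w 1) (dist a p / dist a b) := by
    have := aux_seg (w 0) (w 1) (w 3) (by rw [e03, e01]; exact hp1)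
      (by rw [e31, e03, e01]; exact hp2)
    rwa [e03, e01] at this
  have hq : w 4 = lineMap (w 1) (w 2) (dist b q / dist b c) := by
    have := aux_seg (w 1) (w 2) (w 4) (by rw [e14, e12]; exact hq1)
      (by rw [e42, e14, e12]; exact hq2)
    rwa [e14, e12] at this
  have h1 := aux_L1 A B C (dist a p / dist a b) (dist b q / dist b c)
  have h2 := aux_L1 (w 0) (w 1) (w 2) (dist a p / dist a b) (dist b q / dist b c)
  rw [← hp, ← hq, e01, e12, e02, e34] at h2
  rw [hAB, hBC, hAC, ← h2] at h1
  calc dist (lineMap A B (dist a p / dist a b)) (lineMap B C (dist b q / dist b c))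
      = Real.sqrt (dist (lineMap A B (dist a p / dist a b)) (lineMap B C (dist b q / dist b c)) ^ 2) :=
        (Real.sqrt_sq dist_nonneg).symm
    _ = Real.sqrt (dist p q ^ 2) := by rw [h1]
    _ = dist p q := Real.sqrt_sq dist_nonneg

lemma aux_tri (dab dbc dca : ℝ) (h1 : 0 ≤ dab) (h2 : 0 ≤ dbc) (h3 : 0 ≤ dca)
    (t1 : dbc ≤ dab + dca) (t2 : dca ≤ dab + dbc) (t3 : dab ≤ dbc + dca) :
    ∃ A B C : EuclideanSpace ℝ (Fin 2), dist A B = dab ∧ dist B C = dbc ∧ dist A C = dca := by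
  have hde : ∀ (x y : ℝ),
      dist ((WithLp.equiv 2 (Fin 2 → ℝ)).symm ![0, 0]) ((WithLp.equiv 2 (Fin 2 → ℝ)).symm ![x, y])
        = Real.sqrt (x^2 + y^2) := by
    intro x y
    rw [EuclideanSpace.dist_eq]
    simp [Fin.sum_univ_two, Real.dist_eq, sq_abs]
  have hde2 : ∀ (x y x' y' : ℝ),
      dist ((WithLp.equiv 2 (Fin 2 → ℝ)).symm ![x, y]) ((WithLp.equiv 2 (Fin 2 → ℝ)).symm ![x', y'])
        = Real.sqrt ((x-x')^2 + (y-y')^2) := by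
    intro x y x' y'
    rw [EuclideanSpace.dist_eq]
    simp [Fin.sum_univ_two, Real.dist_eq, sq_abs]
  rcases eq_or_lt_of_le h1 with h0 | h0
  · -- dab = 0
    refine ⟨(WithLp.equiv 2 (Fin 2 → ℝ)).symm ![0,0], (WithLp.equiv 2 (Fin 2 → ℝ)).symm ![0,0],
      (WithLp.equiv 2 (Fin 2 → ℝ)).symm ![dca, 0], ?_, ?_, ?_⟩
    · rw [hde]; simp [← h0]
    · rw [hde]
      have : dbc = dca := le_antisymm (by linarith) (by linarith)
      rw [this]
      simp [Real.sqrt_sq h3]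
    · rw [hde]; simp [Real.sqrt_sq h3]
  · set cx : ℝ := (dab^2 + dca^2 - dbc^2)/(2*dab) with hcx
    have hcx2 : cx^2 ≤ dca^2 := by
      rw [hcx, div_pow, div_le_iff₀ (by positivity)]
      have f1 : (0:ℝ) ≤ dab + dca + dbc := by linarith
      have f2 : (0:ℝ) ≤ dab + dca - dbc := by linarith
      have f3 : (0:ℝ) ≤ dab + dbc - dca := by linarith
      have f4 : (0:ℝ) ≤ dbc + dca - dab := by linarith
      nlinarith [mul_nonneg (mul_nonneg (mul_nonneg f1 f2) f3) f4]
    set cy : ℝ := Real.sqrt (dca^2 - cx^2) with hcy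
    have hcysq : cy^2 = dca^2 - cx^2 := Real.sq_sqrt (by linarith)
    refine ⟨(WithLp.equiv 2 (Fin 2 → ℝ)).symm ![0,0], (WithLp.equiv 2 (Fin 2 → ℝ)).symm ![dab,0],
      (WithLp.equiv 2 (Fin 2 → ℝ)).symm ![cx, cy], ?_, ?_, ?_⟩
    · rw [hde]; simp [Real.sqrt_sq h1]
    · rw [hde2]
      have key : 2 * dab * cx = dab^2 + dca^2 - dbc^2 := by
        rw [hcx]; field_simp
      have : (dab - cx)^2 + (0 - cy)^2 = dbc^2 := by nlinarith [hcysq]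
      rw [this, Real.sqrt_sq h2]
    · rw [hde]
      have : cx^2 + cy^2 = dca^2 := by nlinarith [hcysq]
      rw [this, Real.sqrt_sq h3]

lemma aux_same {X : Type*} [MetricSpace X] {γ : ℝ → X} {L : ℝ} {p q x y : X}
    {E : Type*} [NormedAddCommGroup E] [NormedSpace ℝ E] (P Q : E)
    (h0 : γ 0 = p) (hL : γ L = q)
    (hiso : ∀ t ∈ Set.Icc (0:ℝ) L, ∀ t' ∈ Set.Icc (0:ℝ) L, dist (γ t) (γ t') = |t - t'|)
    (hx : x ∈ γ '' Set.Icc (0:ℝ) L) (hy : y ∈ γ '' Set.Icc (0:ℝ) L)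
    (hPQ : dist P Q = dist p q) :
    dist (lineMap P Q (dist p x / dist p q)) (lineMap P Q (dist p y / dist p q)) = dist x y := by
  obtain ⟨t, ht, rfl⟩ := hx
  obtain ⟨t', ht', rfl⟩ := hy
  have hL0 : 0 ≤ L := le_trans ht.1 ht.2
  have h0m : (0:ℝ) ∈ Set.Icc (0:ℝ) L := ⟨le_refl _, hL0⟩
  have hLm : L ∈ Set.Icc (0:ℝ) L := ⟨hL0, le_refl _⟩
  have e1 : dist p q = L := by
    rw [← h0, ← hL, hiso 0 h0m L hLm, abs_of_nonpos (by linarith)]; ring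
  have e2 : dist p (γ t) = t := by
    rw [← h0, hiso 0 h0m t ht, abs_of_nonpos (by linarith [ht.1])]; ring
  have e2' : dist p (γ t') = t' := by
    rw [← h0, hiso 0 h0m t' ht', abs_of_nonpos (by linarith [ht'.1])]; ring
  rw [dist_lineMap_lineMap, hPQ, e1, e2, e2', hiso t ht t' ht']
  rcases eq_or_ne L 0 with h | h
  · have : t = 0 := le_antisymm (h ▸ ht.2) ht.1
    have : t' = 0 := le_antisymm (h ▸ ht'.2) ht'.1
    simp_all
  · rw [Real.dist_eq, div_sub_div_same, abs_div, abs_of_nonneg hL0, div_mul_cancel₀ _ h]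


theorem stmt14 {X : Type*} [MetricSpace X]
    (hgeo : ∀ x y : X, ∃ (L : ℝ) (γ : ℝ → X), 0 ≤ L ∧ γ 0 = x ∧ γ L = y ∧
      ∀ t ∈ Set.Icc (0:ℝ) L, ∀ t' ∈ Set.Icc (0:ℝ) L, dist (γ t) (γ t') = |t - t'|)
    (hpd : ∀ l : ℝ, 0 < l → ∀ (n : ℕ) (x : Fin n → X) (c : Fin n → ℝ),
      0 ≤ ∑ i, ∑ j, c i * c j * Real.exp (-l * (dist (x i) (x j)) ^ 2)) :
    ∀ (a b c : X) (Lab Lbc Lca : ℝ) (γab γbc γca : ℝ → X),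
      (γab 0 = a ∧ γab Lab = b ∧ ∀ t ∈ Set.Icc (0:ℝ) Lab, ∀ t' ∈ Set.Icc (0:ℝ) Lab,
        dist (γab t) (γab t') = |t - t'|) →
      (γbc 0 = b ∧ γbc Lbc = c ∧ ∀ t ∈ Set.Icc (0:ℝ) Lbc, ∀ t' ∈ Set.Icc (0:ℝ) Lbc,
        dist (γbc t) (γbc t') = |t - t'|) →
      (γca 0 = c ∧ γca Lca = a ∧ ∀ t ∈ Set.Icc (0:ℝ) Lca, ∀ t' ∈ Set.Icc (0:ℝ) Lca,
        dist (γca t) (γca t') = |t - t'|) →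
      ∃ F : X → EuclideanSpace ℝ (Fin 2),
        ∀ x ∈ (γab '' Set.Icc (0:ℝ) Lab ∪ γbc '' Set.Icc (0:ℝ) Lbc ∪ γca '' Set.Icc (0:ℝ) Lca),
        ∀ y ∈ (γab '' Set.Icc (0:ℝ) Lab ∪ γbc '' Set.Icc (0:ℝ) Lbc ∪ γca '' Set.Icc (0:ℝ) Lca),
          dist (F x) (F y) = dist x y := by
  classical
  intro a b c Lab Lbc Lca γab γbc γca h1 h2 h3
  obtain ⟨ha0, haL, hai⟩ := h1
  obtain ⟨hb0, hbL, hbi⟩ := h2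
  obtain ⟨hc0, hcL, hci⟩ := h3
  have hneg := aux_negtype hpd
  have hemb : ∀ z : Fin 5 → X, ∃ w : Fin 5 → EuclideanSpace ℝ (Fin 5),
      ∀ i j, dist (w i) (w j) = dist (z i) (z j) := fun z => by
    exact aux_embed hneg 4 z
  obtain ⟨A, B, C, hAB, hBC, hAC⟩ := aux_tri (dist a b) (dist b c) (dist c a)
    dist_nonneg dist_nonneg dist_nonneg
    (by linarith [dist_triangle b a c, dist_comm b a, dist_comm a c])
    (by linarith [dist_triangle c b a, dist_comm c b, dist_comm b a])
    (by linarith [dist_triangle a c b, dist_comm a c, dist_comm c b])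
  set Sab := γab '' Set.Icc (0:ℝ) Lab with hSab
  set Sbc := γbc '' Set.Icc (0:ℝ) Lbc with hSbc
  set Sca := γca '' Set.Icc (0:ℝ) Lca with hSca
  set Pab : X → EuclideanSpace ℝ (Fin 2) :=
    fun x => AffineMap.lineMap A B (dist a x / dist a b) with hPab
  set Pbc : X → EuclideanSpace ℝ (Fin 2) :=
    fun x => AffineMap.lineMap B C (dist b x / dist b c) with hPbc
  set Pca : X → EuclideanSpace ℝ (Fin 2) :=
    fun x => AffineMap.lineMap C A (dist c x / dist c a) with hPca
  -- same-side claims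
  have Hab_ab : ∀ x ∈ Sab, ∀ y ∈ Sab, dist (Pab x) (Pab y) = dist x y :=
    fun x hx y hy => aux_same A B ha0 haL hai hx hy hAB
  have Hbc_bc : ∀ x ∈ Sbc, ∀ y ∈ Sbc, dist (Pbc x) (Pbc y) = dist x y :=
    fun x hx y hy => aux_same B C hb0 hbL hbi hx hy hBC
  have Hca_ca : ∀ x ∈ Sca, ∀ y ∈ Sca, dist (Pca x) (Pca y) = dist x y :=
    fun x hx y hy => aux_same C A hc0 hcL hci hx hy (by rw [dist_comm C A]; exact hAC)
  -- adjacent claims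
  have Hab_bc : ∀ x ∈ Sab, ∀ y ∈ Sbc, dist (Pab x) (Pbc y) = dist x y := by
    intro x hx y hy
    obtain ⟨e1, e2, e3⟩ := aux_side ha0 haL hai hx
    obtain ⟨f1, f2, f3⟩ := aux_side hb0 hbL hbi hy
    exact aux_adj hemb a b c x y A B C hAB hBC (by rw [hAC, dist_comm])
      (by rw [e1]; exact e2) (by rw [e1]; exact e3)
      (by rw [f1]; exact f2) (by rw [f1]; exact f3)
  have Hbc_ca : ∀ x ∈ Sbc, ∀ y ∈ Sca, dist (Pbc x) (Pca y) = dist x y := by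
    intro x hx y hy
    obtain ⟨e1, e2, e3⟩ := aux_side hb0 hbL hbi hx
    obtain ⟨f1, f2, f3⟩ := aux_side hc0 hcL hci hy
    exact aux_adj hemb b c a x y B C A hBC (by rw [dist_comm C A]; exact hAC)
      (by rw [dist_comm B A, dist_comm b a]; exact hAB)
      (by rw [e1]; exact e2) (by rw [e1]; exact e3)
      (by rw [f1]; exact f2) (by rw [f1]; exact f3)
  have Hca_ab : ∀ x ∈ Sca, ∀ y ∈ Sab, dist (Pca x) (Pab y) = dist x y := by
    intro x hx y hy
    obtain ⟨e1, e2, e3⟩ := aux_side hc0 hcL hci hx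
    obtain ⟨f1, f2, f3⟩ := aux_side ha0 haL hai hy
    exact aux_adj hemb c a b x y C A B (by rw [dist_comm C A]; exact hAC) hAB
      (by rw [dist_comm C B, dist_comm c b]; exact hBC)
      (by rw [e1]; exact e2) (by rw [e1]; exact e3)
      (by rw [f1]; exact f2) (by rw [f1]; exact f3)
  -- reversed claims
  have Hbc_ab : ∀ x ∈ Sbc, ∀ y ∈ Sab, dist (Pbc x) (Pab y) = dist x y := fun x hx y hy => by
    rw [dist_comm, Hab_bc y hy x hx, dist_comm]
  have Hca_bc : ∀ x ∈ Sca, ∀ y ∈ Sbc, dist (Pca x) (Pbc y) = dist x y := fun x hx y hy => by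
    rw [dist_comm, Hbc_ca y hy x hx, dist_comm]
  have Hab_ca : ∀ x ∈ Sab, ∀ y ∈ Sca, dist (Pab x) (Pca y) = dist x y := fun x hx y hy => by
    rw [dist_comm, Hca_ab y hy x hx, dist_comm]
  refine ⟨fun x => if x ∈ Sab then Pab x else if x ∈ Sbc then Pbc x else Pca x, ?_⟩
  intro x hx y hy
  have hx' : x ∈ Sab ∨ x ∈ Sbc ∨ x ∈ Sca := by
    rcases hx with (h | h) | h
    · exact Or.inl h
    · exact Or.inr (Or.inl h)
    · exact Or.inr (Or.inr h)
  have hy' : y ∈ Sab ∨ y ∈ Sbc ∨ y ∈ Sca := by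
    rcases hy with (h | h) | h
    · exact Or.inl h
    · exact Or.inr (Or.inl h)
    · exact Or.inr (Or.inr h)
  by_cases hx1 : x ∈ Sab <;> by_cases hx2 : x ∈ Sbc <;>
    by_cases hy1 : y ∈ Sab <;> by_cases hy2 : y ∈ Sbc <;>
    simp only [hx1, hx2, hy1, hy2, if_true, if_false] <;>
    first
      | exact Hab_ab x hx1 y hy1
      | exact Hab_bc x hx1 y hy2
      | exact Hab_ca x hx1 y (hy'.resolve_left hy1 |>.resolve_left hy2)
      | exact Hbc_ab x hx2 y hy1
      | exact Hbc_bc x hx2 y hy2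
      | exact Hbc_ca x hx2 y (hy'.resolve_left hy1 |>.resolve_left hy2)
      | exact Hca_ab x (hx'.resolve_left hx1 |>.resolve_left hx2) y hy1
      | exact Hca_bc x (hx'.resolve_left hx1 |>.resolve_left hx2) y hy2
      | exact Hca_ca x (hx'.resolve_left hx1 |>.resolve_left hx2) y
          (hy'.resolve_left hy1 |>.resolve_left hy2)
end

section
/- Let (X, d) be a metric space. The metric d is conditionally negative definite if and only if the geodesic Laplacian kernel k(x, y) = exp(-λ d(x, y)) is positive definite for every λ > 0. -/
open Finset

/-- Schur product step in quadratic-form language. -/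
lemma schur_step {n : ℕ} {M : Matrix (Fin n) (Fin n) ℝ} (hM : M.PosSemidef)
    {f : Fin n → Fin n → ℝ} (hf : ∀ c : Fin n → ℝ, 0 ≤ ∑ i, ∑ j, c i * c j * f i j)
    (c : Fin n → ℝ) : 0 ≤ ∑ i, ∑ j, c i * c j * (M i j * f i j) := by
  obtain ⟨m, V, hV⟩ := Matrix.posSemidef_iff_eq_sum_vecMulVec.mp hM
  have hM' : ∀ i j, M i j = ∑ k, V k i * V k j := by
    intro i j
    rw [hV]
    simp [Matrix.sum_apply, Matrix.vecMulVec_apply, Pi.star_apply, star_trivial]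
  calc ∑ i, ∑ j, c i * c j * (M i j * f i j)
      = ∑ i, ∑ j, ∑ k, (c i * V k i) * (c j * V k j) * f i j := by
        refine Finset.sum_congr rfl fun i _ => Finset.sum_congr rfl fun j _ => ?_
        rw [hM', Finset.sum_mul, Finset.mul_sum]
        exact Finset.sum_congr rfl fun k _ => by ring
    _ = ∑ k, ∑ i, ∑ j, (c i * V k i) * (c j * V k j) * f i j := by
        rw [show (∑ i, ∑ j, ∑ k, (c i * V k i) * (c j * V k j) * f i j : ℝ)
            = ∑ i, ∑ k, ∑ j, (c i * V k i) * (c j * V k j) * f i j from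
          Finset.sum_congr rfl fun i _ => Finset.sum_comm]
        exact Finset.sum_comm
    _ ≥ 0 := Finset.sum_nonneg fun k _ => hf fun i => c i * V k i

/-- symmetric + nonneg quadratic form → PosSemidef -/
lemma psd_of_qf {n : ℕ} {M : Matrix (Fin n) (Fin n) ℝ}
    (hsym : ∀ i j, M i j = M j i)
    (hq : ∀ c : Fin n → ℝ, 0 ≤ ∑ i, ∑ j, c i * c j * M i j) : M.PosSemidef := by
  refine Matrix.posSemidef_iff_dotProduct_mulVec.mpr ⟨?_, ?_⟩
  · ext i j
    simp [Matrix.conjTranspose_apply, hsym i j]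
  · intro x
    have := hq x
    simpa [dotProduct, Matrix.mulVec, Finset.mul_sum, mul_assoc,
      mul_comm, mul_left_comm] using this

lemma qf_pow {n : ℕ} {M : Matrix (Fin n) (Fin n) ℝ} (hM : M.PosSemidef) :
    ∀ (k : ℕ) (c : Fin n → ℝ), 0 ≤ ∑ i, ∑ j, c i * c j * (M i j) ^ k := by
  intro k
  induction k with
  | zero =>
    intro c
    have : ∑ i, ∑ j, c i * c j * (M i j) ^ 0 = (∑ i, c i) * (∑ j, c j) := by
      rw [Finset.sum_mul_sum]
      simp
    rw [this]
    exact mul_self_nonneg _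
  | succ k ih =>
    intro c
    have := schur_step hM (f := fun i j => (M i j) ^ k) ih c
    simpa [pow_succ, mul_comm, mul_left_comm, mul_assoc] using this

lemma qf_exp {n : ℕ} {M : Matrix (Fin n) (Fin n) ℝ} (hM : M.PosSemidef)
    (c : Fin n → ℝ) : 0 ≤ ∑ i, ∑ j, c i * c j * Real.exp (M i j) := by
  have hexp : ∀ y : ℝ, Real.exp y = ∑' k : ℕ, y ^ k / k.factorial := by
    intro y
    rw [Real.exp_eq_exp_ℝ, NormedSpace.exp_eq_tsum ℝ]
    exact tsum_congr fun k => by rw [smul_eq_mul, div_eq_inv_mul]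
  have hsum : ∀ i j : Fin n, Summable (fun k : ℕ => c i * c j * ((M i j) ^ k / k.factorial)) :=
    fun i j => (Real.summable_pow_div_factorial (M i j)).mul_left _
  calc (0:ℝ) ≤ ∑' k : ℕ, ∑ i, ∑ j, c i * c j * ((M i j) ^ k / k.factorial) := by
        refine tsum_nonneg fun k => ?_
        have : ∑ i, ∑ j, c i * c j * ((M i j) ^ k / k.factorial)
            = (∑ i, ∑ j, c i * c j * (M i j) ^ k) / k.factorial := by
          rw [Finset.sum_div]
          exact Finset.sum_congr rfl fun i _ => by
            rw [Finset.sum_div]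
            exact Finset.sum_congr rfl fun j _ => by ring
        rw [this]
        exact div_nonneg (qf_pow hM k c) (by positivity)
    _ = ∑ i, ∑ j, ∑' k : ℕ, c i * c j * ((M i j) ^ k / k.factorial) := by
        rw [Summable.tsum_finsetSum (fun i _ => summable_sum fun j _ => hsum i j)]
        exact Finset.sum_congr rfl fun i _ => Summable.tsum_finsetSum fun j _ => hsum i j
    _ = ∑ i, ∑ j, c i * c j * Real.exp (M i j) := by
        refine Finset.sum_congr rfl fun i _ => Finset.sum_congr rfl fun j _ => ?_
        rw [hexp, ← tsum_mul_left]

lemma forward {X : Type*} [MetricSpace X]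
    (h : ∀ (n : ℕ) (x : Fin n → X) (c : Fin n → ℝ), (∑ i, c i) = 0 →
      ∑ i, ∑ j, c i * c j * dist (x i) (x j) ≤ 0)
    {l : ℝ} (hl : 0 < l) (n : ℕ) (x : Fin n → X) (c : Fin n → ℝ) :
    0 ≤ ∑ i, ∑ j, c i * c j * Real.exp (-l * dist (x i) (x j)) := by
  match n with
  | 0 => simp
  | m + 1 =>
    set x0 : X := x 0 with hx0
    set M : Matrix (Fin (m+1)) (Fin (m+1)) ℝ :=
      Matrix.of fun i j => l * (dist (x i) x0 + dist (x j) x0 - dist (x i) (x j)) with hMdef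
    have hqM : ∀ c' : Fin (m+1) → ℝ, 0 ≤ ∑ i, ∑ j, c' i * c' j * M i j := by
      intro c'
      set s : ℝ := ∑ k, c' k with hs
      set A : ℝ := ∑ k, c' k * dist (x k) x0 with hA
      set T : ℝ := ∑ i, ∑ j, c' i * c' j * dist (x i) (x j) with hT
      set b : Fin (m+1) → ℝ := fun i => c' i - s * (if i = 0 then 1 else 0) with hbdef
      have hb : ∑ i, b i = 0 := by
        simp [hbdef, Finset.sum_sub_distrib, mul_ite, mul_one, mul_zero,
          Finset.sum_ite_eq', ← hs]
      have key := h (m+1) x b hb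
      have E1 : ∑ i, ∑ j, b i * b j * dist (x i) (x j) = T - 2 * s * A := by
        have inner : ∀ i, ∑ j, b i * b j * dist (x i) (x j)
            = b i * (∑ j, c' j * dist (x i) (x j)) - b i * s * dist (x i) x0 := by
          intro i
          have : ∀ j, b i * b j * dist (x i) (x j)
              = b i * (c' j * dist (x i) (x j))
                - (if j = 0 then b i * s * dist (x i) x0 else 0) := by
            intro j
            rcases eq_or_ne j 0 with rfl | hj
            · simp [hbdef, hx0]; ring
            · simp [hbdef, hj]; ring
          rw [Finset.sum_congr rfl fun j _ => this j, Finset.sum_sub_distrib,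
            Finset.sum_ite_eq']
          simp [Finset.mul_sum]
        rw [Finset.sum_congr rfl fun i _ => inner i, Finset.sum_sub_distrib]
        have h1 : ∑ i, b i * (∑ j, c' j * dist (x i) (x j))
            = T - s * ∑ j, c' j * dist x0 (x j) := by
          have : ∀ i, b i * (∑ j, c' j * dist (x i) (x j))
              = c' i * (∑ j, c' j * dist (x i) (x j))
                - (if i = 0 then s * ∑ j, c' j * dist x0 (x j) else 0) := by
            intro i
            rcases eq_or_ne i 0 with rfl | hi
            · simp [hbdef, hx0]; ring
            · simp [hbdef, hi]
          rw [Finset.sum_congr rfl fun i _ => this i, Finset.sum_sub_distrib,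
            Finset.sum_ite_eq']
          simp only [Finset.mem_univ, if_true, hT]
          congr 1
          exact Finset.sum_congr rfl fun i _ => by
            rw [Finset.mul_sum]
            exact Finset.sum_congr rfl fun j _ => by ring
        have h2 : ∑ i, b i * s * dist (x i) x0 = s * A := by
          have : ∀ i, b i * s * dist (x i) x0
              = s * (c' i * dist (x i) x0) - (if i = 0 then s * s * dist x0 x0 else 0) := by
            intro i
            rcases eq_or_ne i 0 with rfl | hi
            · simp [hbdef, hx0]
            · simp [hbdef, hi]; ring
          rw [Finset.sum_congr rfl fun i _ => this i, Finset.sum_sub_distrib,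
            Finset.sum_ite_eq', ← Finset.mul_sum]
          simp [← hA]
        have h3 : ∑ j, c' j * dist x0 (x j) = A := by
          rw [hA]
          exact Finset.sum_congr rfl fun j _ => by rw [dist_comm]
        rw [h1, h2, h3]
        ring
      have E2 : ∑ i, ∑ j, c' i * c' j * M i j = l * (2 * s * A - T) := by
        have inner : ∀ i, ∑ j, c' i * c' j * M i j
            = (l * (c' i * dist (x i) x0)) * s + (l * c' i) * A
              - l * ∑ j, c' i * c' j * dist (x i) (x j) := by
          intro i
          have e : ∀ j, c' i * c' j * M i j
              = (l * (c' i * dist (x i) x0)) * c' j + (l * c' i) * (c' j * dist (x j) x0)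
                - l * (c' i * c' j * dist (x i) (x j)) := by
            intro j
            simp only [hMdef, Matrix.of_apply]
            ring
          rw [Finset.sum_congr rfl fun j _ => e j, Finset.sum_sub_distrib,
            Finset.sum_add_distrib, ← Finset.mul_sum, ← Finset.mul_sum, ← Finset.mul_sum,
            ← hs, ← hA]
        rw [Finset.sum_congr rfl fun i _ => inner i, Finset.sum_sub_distrib,
          Finset.sum_add_distrib, ← Finset.sum_mul, ← Finset.sum_mul]
        have e3 : ∑ i, l * ∑ j, c' i * c' j * dist (x i) (x j) = l * T := by
          rw [hT, Finset.mul_sum]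
        have e1 : ∑ i, l * (c' i * dist (x i) x0) = l * A := by
          rw [hA, Finset.mul_sum]
        have e2 : ∑ i, l * c' i = l * s := by rw [hs, Finset.mul_sum]
        rw [e3, e1, e2]
        ring
      rw [E2]
      have : T - 2 * s * A ≤ 0 := by rw [← E1]; exact key
      nlinarith
    have hpsd : M.PosSemidef := by
      refine psd_of_qf (fun i j => ?_) hqM
      simp only [hMdef, Matrix.of_apply]
      rw [dist_comm (x i) (x j)]
      ring
    have main := qf_exp hpsd (fun i => c i * Real.exp (-l * dist (x i) x0))
    calc (0:ℝ) ≤ _ := main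
      _ = ∑ i, ∑ j, c i * c j * Real.exp (-l * dist (x i) (x j)) := by
        refine Finset.sum_congr rfl fun i _ => Finset.sum_congr rfl fun j _ => ?_
        simp only [hMdef, Matrix.of_apply]
        have e : -l * dist (x i) x0 + (-l * dist (x j) x0)
            + l * (dist (x i) x0 + dist (x j) x0 - dist (x i) (x j))
            = -l * dist (x i) (x j) := by ring
        calc c i * Real.exp (-l * dist (x i) x0) * (c j * Real.exp (-l * dist (x j) x0)) *
              Real.exp (l * (dist (x i) x0 + dist (x j) x0 - dist (x i) (x j)))
            = c i * c j * Real.exp (-l * dist (x i) x0 + (-l * dist (x j) x0)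
              + l * (dist (x i) x0 + dist (x j) x0 - dist (x i) (x j))) := by
              rw [Real.exp_add, Real.exp_add]; ring
          _ = c i * c j * Real.exp (-l * dist (x i) (x j)) := by rw [e]

lemma slope_tendsto (t : ℝ) :
    Filter.Tendsto (fun l : ℝ => (1 - Real.exp (-l * t)) / l)
      (nhdsWithin 0 (Set.Ioi 0)) (nhds t) := by
  have h1 : HasDerivAt (fun l : ℝ => -l * t) (-t) 0 := by
    simpa [neg_mul, Pi.neg_def] using ((hasDerivAt_id (0:ℝ)).mul_const t).neg
  have h2 : HasDerivAt (fun l : ℝ => 1 - Real.exp (-l * t)) t 0 := by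
    simpa using (h1.exp.const_sub 1)
  have h3 := hasDerivAt_iff_tendsto_slope.mp h2
  have h4 : Filter.Tendsto (slope (fun l : ℝ => 1 - Real.exp (-l * t)) 0)
      (nhdsWithin 0 (Set.Ioi 0)) (nhds t) :=
    h3.mono_left (nhdsWithin_mono 0 (fun y hy => ne_of_gt hy))
  refine h4.congr fun l => ?_
  simp [slope_def_field]

lemma backward {X : Type*} [MetricSpace X]
    (h : ∀ l : ℝ, 0 < l → ∀ (n : ℕ) (x : Fin n → X) (c : Fin n → ℝ),
      0 ≤ ∑ i, ∑ j, c i * c j * Real.exp (-l * dist (x i) (x j)))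
    (n : ℕ) (x : Fin n → X) (c : Fin n → ℝ) (hc : (∑ i, c i) = 0) :
    ∑ i, ∑ j, c i * c j * dist (x i) (x j) ≤ 0 := by
  set F : ℝ → ℝ := fun l => ∑ i, ∑ j, c i * c j *
    ((1 - Real.exp (-l * dist (x i) (x j))) / l) with hF
  have htend : Filter.Tendsto F (nhdsWithin 0 (Set.Ioi 0))
      (nhds (∑ i, ∑ j, c i * c j * dist (x i) (x j))) := by
    refine tendsto_finset_sum _ fun i _ => tendsto_finset_sum _ fun j _ => ?_
    exact (slope_tendsto (dist (x i) (x j))).const_mul _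
  have hev : ∀ᶠ l in nhdsWithin 0 (Set.Ioi 0), F l ≤ 0 := by
    filter_upwards [self_mem_nhdsWithin] with l (hl : (0:ℝ) < l)
    have hE := h l hl n x c
    have hzero : ∑ i, ∑ j, c i * c j * (1:ℝ) = 0 := by
      have : ∑ i, ∑ j, c i * c j * (1:ℝ) = (∑ i, c i) * (∑ j, c j) := by
        rw [Finset.sum_mul_sum]
        simp
      rw [this, hc, mul_zero]
    have hFl : F l = (∑ i, ∑ j, (c i * c j * 1 - c i * c j * Real.exp (-l * dist (x i) (x j)))) / l := by
      rw [hF, Finset.sum_div]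
      refine Finset.sum_congr rfl fun i _ => ?_
      rw [Finset.sum_div]
      refine Finset.sum_congr rfl fun j _ => ?_
      ring
    have hnum : ∑ i, ∑ j, (c i * c j * 1 - c i * c j * Real.exp (-l * dist (x i) (x j)))
        = - ∑ i, ∑ j, c i * c j * Real.exp (-l * dist (x i) (x j)) := by
      rw [Finset.sum_congr rfl fun i _ => Finset.sum_sub_distrib .., Finset.sum_sub_distrib,
        hzero, zero_sub]
    rw [hFl, hnum]
    have : -∑ i, ∑ j, c i * c j * Real.exp (-l * dist (x i) (x j)) ≤ 0 := by linarith
    exact div_nonpos_of_nonpos_of_nonneg this hl.le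
  exact le_of_tendsto htend hev

theorem stmt16 {X : Type*} [MetricSpace X] :
    (∀ (n : ℕ) (x : Fin n → X) (c : Fin n → ℝ), (∑ i, c i) = 0 →
      ∑ i, ∑ j, c i * c j * dist (x i) (x j) ≤ 0) ↔
    (∀ l : ℝ, 0 < l → ∀ (n : ℕ) (x : Fin n → X) (c : Fin n → ℝ),
      0 ≤ ∑ i, ∑ j, c i * c j * Real.exp (-l * dist (x i) (x j))) := by
  constructor
  · intro h l hl n x c
    exact forward h hl n x c
  · intro h n x c hc
    exact backward h n x c hc
end

section
/- Let (X, d) be a metric space and suppose there exist four points x₁, x₂, x₃, x₄ ∈ X and real numbers c₁, c₂, c₃, c₄ with Σ cᵢ = 0 such that Σᵢⱼ cᵢ cⱼ d(xᵢ, xⱼ) > 0. Then there exists λ > 0 such that the kernel exp(-λ d(x, y)) is not positive definite on X. -/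
theorem stmt18 {X : Type*} [MetricSpace X] (x : Fin 4 → X) (c : Fin 4 → ℝ)
    (hc : ∑ i, c i = 0) (h : 0 < ∑ i, ∑ j, c i * c j * dist (x i) (x j)) :
    ∃ l : ℝ, 0 < l ∧ ¬ (∀ (n : ℕ) (y : Fin n → X) (a : Fin n → ℝ),
      0 ≤ ∑ i, ∑ j, a i * a j * Real.exp (-l * dist (y i) (y j))) := by
  set F : ℝ → ℝ := fun l => ∑ i, ∑ j, c i * c j * Real.exp (-l * dist (x i) (x j)) with hF
  have hF0 : F 0 = 0 := by
    simp only [hF, neg_zero, zero_mul, Real.exp_zero, mul_one]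
    rw [← Finset.sum_mul_sum, hc, zero_mul]
  set S : ℝ := ∑ i, ∑ j, c i * c j * dist (x i) (x j) with hS
  have hderiv : HasDerivAt F (-S) 0 := by
    have : HasDerivAt F (∑ i, ∑ j, c i * c j * dist (x i) (x j) * (-1)) 0 := by
      apply HasDerivAt.fun_sum
      intro i _
      apply HasDerivAt.fun_sum
      intro j _
      have h1 : HasDerivAt (fun l : ℝ => -l * dist (x i) (x j))
          (-dist (x i) (x j)) 0 := by
        simpa using ((hasDerivAt_id (0:ℝ)).neg.mul_const (dist (x i) (x j)))
      have h2 := (h1.exp).const_mul (c i * c j)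
      simpa [mul_comm, mul_assoc, mul_left_comm] using h2
    convert this using 1
    rw [hS, ← Finset.sum_neg_distrib]
    congr 1; ext i
    rw [← Finset.sum_neg_distrib]
    congr 1; ext j
    ring
  have hslope := hasDerivAt_iff_tendsto_slope.mp hderiv
  have hneg : -S < 0 := by linarith
  have hev : ∀ᶠ l in nhdsWithin 0 {(0:ℝ)}ᶜ, slope F 0 l < 0 :=
    hslope (Iio_mem_nhds hneg)
  have hev2 : ∀ᶠ l in nhdsWithin 0 (Set.Ioi 0), slope F 0 l < 0 :=
    hev.filter_mono (nhdsWithin_mono 0 (fun a ha => ne_of_gt ha))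
  have : ∃ l, 0 < l ∧ slope F 0 l < 0 := by
    rcases (hev2.and self_mem_nhdsWithin).exists with ⟨l, h1, h2⟩
    exact ⟨l, h2, h1⟩
  obtain ⟨l, hl, hsl⟩ := this
  refine ⟨l, hl, fun hall => ?_⟩
  have := hall 4 x c
  rw [slope_def_field, hF0, sub_zero, sub_zero, div_neg_iff] at hsl
  rcases hsl with ⟨h1, h2⟩ | ⟨h1, h2⟩
  · linarith
  · exact absurd this (not_le.mpr h1)
end
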